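/- arXiv:0905.3642 — 7 statements merged into one kernel-verified Lean document; each statement's English description precedes it below -/
import Mathlib

section
/- Let a = 1 and α := b x_{-1} x_0 with α ≠ -1/n for all positive integers n. Then every solution of x_{n+1} = x_{n-1}/(a + b x_n x_{n-1}) satisfies x_{n+1} = h(n) x_{n-1} for all n ≥ 0, where h(n) = (1 + α n)/(1 + α(n+1)). -/
/-! The invariant is the product `p n = b * x n * x (n - 1)`: the recurrence gives
`p (n + 1) = p n / (1 + p n)`, a Möbius map conjugate to translation by `1` under
`p ↦ 1 / p`, so `p n = α / (1 + α * n)`. Then `x (n + 1) = x (n - 1) / (1 + p n)` is the claim. -/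

section

variable {K : Type*} [Field K]

lemma one_add_mul_natCast_ne_zero {α : K} (h : ∀ n : ℕ, 1 ≤ n → α ≠ -1 / (n : K)) (n : ℕ) :
    1 + α * n ≠ 0 := by
  by_cases hn : (n : K) = 0
  · simp [hn]
  · intro hzero
    have hpos : 1 ≤ n := Nat.one_le_iff_ne_zero.mpr (by rintro rfl; simp at hn)
    exact h n hpos (by field_simp; linear_combination hzero)

lemma one_add_div_one_add_mul {α t : K} (h : 1 + α * t ≠ 0) :
    1 + α / (1 + α * t) = (1 + α * (t + 1)) / (1 + α * t) := by
  field_simp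
  ring

lemma eq_div_one_add_mul_of_succ_eq_div_one_add {p : ℕ → K} {α : K}
    (hzero : p 0 = α) (hsucc : ∀ n, p (n + 1) = p n / (1 + p n))
    (hne : ∀ n : ℕ, 1 + α * n ≠ 0) (n : ℕ) : p n = α / (1 + α * n) := by
  induction n with
  | zero => simp [hzero]
  | succ k ih =>
    rw [hsucc, ih, one_add_div_one_add_mul (hne k), div_div_div_cancel_right₀ (hne k)]
    push_cast
    rfl

end

theorem stmt_5 (b : ℝ) (x : ℤ → ℝ) (α : ℝ)
    (halpha : α = b * x (-1) * x 0)
    (hadm : ∀ n : ℕ, 1 ≤ n → α ≠ -1 / (n : ℝ))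
    (hrec : ∀ n : ℕ, x ((n : ℤ) + 1) = x ((n : ℤ) - 1) / (1 + b * x (n : ℤ) * x ((n : ℤ) - 1))) :
    ∀ n : ℕ, x ((n : ℤ) + 1) = ((1 + α * n) / (1 + α * (n + 1))) * x ((n : ℤ) - 1) := by
  have hne := one_add_mul_natCast_ne_zero hadm
  have hprod : ∀ n : ℕ, b * x n * x (n - 1) = α / (1 + α * n) := by
    refine eq_div_one_add_mul_of_succ_eq_div_one_add (p := fun n : ℕ ↦ b * x n * x (n - 1))
      (by simp [halpha, mul_right_comm]) (fun n ↦ ?_) hne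
    simp only [Nat.cast_succ, add_sub_cancel_right, hrec n]
    ring
  intro n
  rw [hrec n, hprod n, one_add_div_one_add_mul (hne n), div_div_eq_mul_div]
  ring
end

section
/- Let a ≠ 1 and α := b x_{-1} x_0 with α ≠ a^n(a-1)/(1-a^n) for all positive integers n. Then every solution of x_{n+1} = x_{n-1}/(a + b x_n x_{n-1}) satisfies x_{n+1} = h(n) x_{n-1} for all n ≥ 0, where h(n) = (a^n(1-a) + α(1-a^n))/(a^{n+1}(1-a) + α(1-a^{n+1})). -/
/-!
Write `D n = aⁿ(1 - a) + α(1 - aⁿ)`, so that `h(n) = D n / D (n + 1)`, and `p n = b xₙ xₙ₋₁`.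
The recurrence gives `p (n + 1) = p n / (a + p n)` with `p 0 = α`, and `p n · D n = α(1 - a)` is
invariant along it because `D (n + 1) = a · D n + α(1 - a) = (a + p n) · D n`. The condition on `α`
says exactly that no `D n` vanishes, and then `xₙ₊₁ = xₙ₋₁ / (a + p n) = (D n / D (n + 1)) xₙ₋₁`.
-/

def recDenom (a α : ℝ) (n : ℕ) : ℝ := a ^ n * (1 - a) + α * (1 - a ^ n)

theorem recDenom_ne_zero {a α : ℝ} (ha : a ≠ 1)
    (hadm : ∀ n : ℕ, 1 ≤ n → α ≠ a ^ n * (a - 1) / (1 - a ^ n)) (n : ℕ) :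
    recDenom a α n ≠ 0 := by
  have h1a : 1 - a ≠ 0 := sub_ne_zero.mpr ha.symm
  by_cases hpow : a ^ n = 1
  · simpa [recDenom, hpow] using h1a
  · have hn : 1 ≤ n := Nat.one_le_iff_ne_zero.mpr fun h => hpow (by simp [h])
    have h1an : 1 - a ^ n ≠ 0 := sub_ne_zero.mpr (Ne.symm hpow)
    unfold recDenom
    intro hzero
    apply hadm n hn
    field_simp
    linear_combination hzero

theorem recDenom_succ_eq_mul {a α p : ℝ} {n : ℕ} (hp : p * recDenom a α n = α * (1 - a)) :
    recDenom a α (n + 1) = (a + p) * recDenom a α n := by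
  unfold recDenom at *
  linear_combination -hp

theorem mul_recDenom_eq {a α : ℝ} (p : ℕ → ℝ) (hp0 : p 0 = α)
    (hp : ∀ n, p (n + 1) = p n / (a + p n)) (hD : ∀ n, recDenom a α n ≠ 0) (n : ℕ) :
    p n * recDenom a α n = α * (1 - a) := by
  induction n with
  | zero => simp [recDenom, hp0]
  | succ n ih =>
    have hsucc := recDenom_succ_eq_mul ih
    have hne : a + p n ≠ 0 := fun h => hD (n + 1) (by rw [hsucc, h, zero_mul])
    rw [hp, hsucc, ← ih]
    field_simp

theorem stmt_6 (a b : ℝ) (x : ℤ → ℝ) (α : ℝ)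
    (ha : a ≠ 1)
    (halpha : α = b * x (-1) * x 0)
    (hadm : ∀ n : ℕ, 1 ≤ n → α ≠ a ^ n * (a - 1) / (1 - a ^ n))
    (hrec : ∀ n : ℕ, x ((n : ℤ) + 1) = x ((n : ℤ) - 1) / (a + b * x (n : ℤ) * x ((n : ℤ) - 1))) :
    ∀ n : ℕ, x ((n : ℤ) + 1) =
      ((a ^ n * (1 - a) + α * (1 - a ^ n)) / (a ^ (n + 1) * (1 - a) + α * (1 - a ^ (n + 1))))
        * x ((n : ℤ) - 1) := by
  intro n
  obtain ⟨p, hp_def⟩ : ∃ p : ℕ → ℝ, ∀ n : ℕ, p n = b * x n * x ((n : ℤ) - 1) := ⟨_, fun _ => rfl⟩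
  have hp0 : p 0 = α := by simp [hp_def, halpha, mul_right_comm]
  have hp : ∀ n, p (n + 1) = p n / (a + p n) := fun n => by
    simp only [hp_def, Nat.cast_succ, add_sub_cancel_right, hrec n]
    ring
  have hD := recDenom_ne_zero ha hadm
  have hsucc := recDenom_succ_eq_mul (mul_recDenom_eq p hp0 hp hD n)
  have hne : a + p n ≠ 0 := fun h => hD (n + 1) (by rw [hsucc, h, zero_mul])
  change x (n + 1) = recDenom a α n / recDenom a α (n + 1) * x (n - 1)
  rw [hrec n, ← hp_def, hsucc]
  field_simp [hD n]
end

section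
/- If a = -1 and α := b x_{-1} x_0 ≠ 1, then every admissible solution of x_{n+1} = x_{n-1}/(a + b x_n x_{n-1}) satisfies x_{2k+2} = x_0(α-1)^{k+1} and x_{2k+1} = x_{-1}/(α-1)^{k+1} for all k ≥ 0. -/
theorem stmt_8 (b : ℝ) (x : ℤ → ℝ) (α : ℝ)
    (halpha : α = b * x (-1) * x 0)
    (hα : α ≠ 1)
    (hrec : ∀ n : ℕ, x ((n : ℤ) + 1) = x ((n : ℤ) - 1) / (-1 + b * x (n : ℤ) * x ((n : ℤ) - 1))) :
    ∀ k : ℕ,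
      x (2 * (k : ℤ) + 2) = x 0 * (α - 1) ^ (k + 1) ∧
      x (2 * (k : ℤ) + 1) = x (-1) / (α - 1) ^ (k + 1) := by
  have hne : α - 1 ≠ 0 := sub_ne_zero.mpr hα
  have e1 : x 1 = x (-1) / (α - 1) := by
    have h0 := hrec 0
    norm_num at h0
    rw [h0, show (-1 + b * x 0 * x (-1)) = α - 1 by rw [halpha]; ring]
  have e2 : x 2 = x 0 * (α - 1) := by
    have h1 := hrec 1
    norm_num at h1
    rw [h1, e1, show (-1 + b * (x (-1) / (α - 1)) * x 0) = 1 / (α - 1) by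
      field_simp; rw [halpha]; ring]
    field_simp
  intro k
  induction k with
  | zero =>
    norm_num
    exact ⟨e2, e1⟩
  | succ k ih =>
    obtain ⟨ihe, iho⟩ := ih
    have hpow : ((α - 1) ^ (k + 1) : ℝ) ≠ 0 := pow_ne_zero _ hne
    have hodd : x (2 * (k : ℤ) + 3) = x (-1) / (α - 1) ^ (k + 2) := by
      have h := hrec (2 * k + 2)
      push_cast at h
      rw [show (2 * (k : ℤ) + 2 + 1) = 2 * (k : ℤ) + 3 by ring,
          show (2 * (k : ℤ) + 2 - 1) = 2 * (k : ℤ) + 1 by ring] at h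
      rw [h, ihe, iho]
      rw [show (-1 + b * (x 0 * (α - 1) ^ (k + 1)) * (x (-1) / (α - 1) ^ (k + 1))) = α - 1 by
        field_simp; rw [halpha]; ring]
      rw [div_div, ← pow_succ]
    have heven : x (2 * (k : ℤ) + 4) = x 0 * (α - 1) ^ (k + 2) := by
      have h := hrec (2 * k + 3)
      push_cast at h
      rw [show (2 * (k : ℤ) + 3 + 1) = 2 * (k : ℤ) + 4 by ring,
          show (2 * (k : ℤ) + 3 - 1) = 2 * (k : ℤ) + 2 by ring] at h
      rw [h, ihe, hodd]
      rw [show (-1 + b * (x (-1) / (α - 1) ^ (k + 2)) * (x 0 * (α - 1) ^ (k + 1))) = 1 / (α - 1) by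
        field_simp; rw [halpha]; ring]
      field_simp
      ring
    constructor
    · push_cast
      rw [show (2 * ((k : ℤ) + 1) + 2) = 2 * (k : ℤ) + 4 by ring, heven]
    · push_cast
      rw [show (2 * ((k : ℤ) + 1) + 1) = 2 * (k : ℤ) + 3 by ring, hodd]
end

section
/- If a = -1, α := b x_{-1} x_0 > 2, and x_0 ≠ 0, then the solution of x_{n+1} = x_{n-1}/(-1 + b x_n x_{n-1}) satisfies lim_{k→∞} x_{2k+1} = 0 and |x_{2k+2}| → ∞. -/
theorem stmt_9 (b : ℝ) (x : ℤ → ℝ) (α : ℝ)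
    (halpha : α = b * x (-1) * x 0)
    (hα : 2 < α) (hx0 : x 0 ≠ 0)
    (hrec : ∀ n : ℕ, x ((n : ℤ) + 1) = x ((n : ℤ) - 1) / (-1 + b * x (n : ℤ) * x ((n : ℤ) - 1))) :
    Filter.Tendsto (fun k : ℕ => x (2 * (k : ℤ) + 1)) Filter.atTop (nhds 0) ∧
    Filter.Tendsto (fun k : ℕ => |x (2 * (k : ℤ) + 2)|) Filter.atTop Filter.atTop := by
  set r : ℝ := α - 1 with hrdef
  have hr : 1 < r := by simp [hrdef]; linarith
  have hr0 : r ≠ 0 := by positivity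
  have key : ∀ k : ℕ, x (2 * (k : ℤ)) = x 0 * r ^ k ∧ x (2 * (k : ℤ) - 1) = x (-1) / r ^ k := by
    intro k
    induction k with
    | zero => norm_num
    | succ k ih =>
      obtain ⟨h1, h2⟩ := ih
      have hpk : (r : ℝ) ^ k ≠ 0 := pow_ne_zero _ hr0
      have e1 := hrec (2 * k)
      have e2 := hrec (2 * k + 1)
      push_cast at e1 e2
      have hprod : b * x (2 * (k : ℤ)) * x (2 * (k : ℤ) - 1) = α := by
        rw [h1, h2, halpha]; field_simp
      have hodd : x (2 * (k : ℤ) + 1) = x (-1) / r ^ (k + 1) := by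
        rw [e1, hprod, h2]
        rw [div_div]
        congr 1
        rw [pow_succ, hrdef]
        ring
      have hprod2 : -1 + b * x (2 * (k : ℤ) + 1) * x (2 * (k : ℤ)) = 1 / r := by
        rw [hodd, h1]
        have hs : b * (x (-1) / r ^ (k + 1)) * (x 0 * r ^ k) = α / r := by
          rw [halpha, pow_succ]; field_simp
        rw [hs]
        field_simp
        linarith [hrdef]
      have heven : x (2 * (k : ℤ) + 2) = x 0 * r ^ (k + 1) := by
        have : (2 * (k : ℤ) + 1 + 1) = 2 * (k : ℤ) + 2 := by ring
        rw [this] at e2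
        have : (2 * (k : ℤ) + 1 - 1) = 2 * (k : ℤ)  := by ring
        rw [this] at e2
        rw [e2, hprod2, h1, pow_succ]
        field_simp
      constructor
      · have h : 2 * (((k + 1 : ℕ)) : ℤ) = 2 * (k : ℤ) + 2 := by push_cast; ring
        rw [h]; exact heven
      · have h : 2 * (((k + 1 : ℕ)) : ℤ) - 1 = 2 * (k : ℤ) + 1 := by push_cast; ring
        rw [h]; exact hodd
  have hodd' : ∀ k : ℕ, x (2 * (k : ℤ) + 1) = x (-1) / r ^ (k + 1) := by
    intro k
    have := (key (k + 1)).2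
    have h : (2 * (((k : ℕ) + 1 : ℕ) : ℤ) - 1) = 2 * (k : ℤ) + 1 := by push_cast; ring
    rwa [h] at this
  have heven' : ∀ k : ℕ, x (2 * (k : ℤ) + 2) = x 0 * r ^ (k + 1) := by
    intro k
    have := (key (k + 1)).1
    have h : (2 * (((k : ℕ) + 1 : ℕ) : ℤ)) = 2 * (k : ℤ) + 2 := by push_cast; ring
    rwa [h] at this
  have hpow : Filter.Tendsto (fun k : ℕ => r ^ (k + 1)) Filter.atTop Filter.atTop :=
    (tendsto_pow_atTop_atTop_of_one_lt hr).comp (Filter.tendsto_add_atTop_nat 1)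
  constructor
  · have : Filter.Tendsto (fun k : ℕ => x (-1) / r ^ (k + 1)) Filter.atTop (nhds 0) :=
      Filter.Tendsto.div_atTop tendsto_const_nhds hpow
    exact this.congr (fun k => (hodd' k).symm)
  · have hx0' : 0 < |x 0| := abs_pos.mpr hx0
    have : Filter.Tendsto (fun k : ℕ => |x 0| * r ^ (k + 1)) Filter.atTop Filter.atTop :=
      Filter.Tendsto.const_mul_atTop hx0' hpow
    refine this.congr (fun k => ?_)
    have hrpos : (0:ℝ) < r := by linarith
    rw [heven' k, abs_mul, abs_of_pos (pow_pos hrpos (k + 1))]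
end

section
/- If |a| > 1 and (x_{-1}, x_0) is an admissible initial condition with α := b x_{-1} x_0 ≠ 1 - a, then the solution of x_{n+1} = x_{n-1}/(a + b x_n x_{n-1}) converges to 0. -/
/-!
The products `y n = b * x n * x (n - 1)` satisfy the Riccati equation `y (n + 1) = y n / (a + y n)`,
that is `1 / y (n + 1) = a / y n + 1`, which is linear in `1 / y` and solves to
`y n = α (a - 1) / (a ^ n (a - 1 + α) - α)`; admissibility says exactly that these denominators
never vanish. As `|a| > 1` and `a - 1 + α ≠ 0`, `y n → 0`, so eventually `|a + y n| ≥ r` for a fixed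
`r > 1`. Then `|x (n + 1)| = |x (n - 1)| / |a + y n|` makes the even and the odd terms of `x` decay
geometrically.
-/

open Filter Topology

theorem riccati_solution_eq {K : Type*} [Field K] {a : K} {y : ℕ → K} (ha : a ≠ 1)
    (hy : ∀ n, y (n + 1) = y n / (a + y n))
    (hden : ∀ n, a ^ n * (a - 1 + y 0) - y 0 ≠ 0) (n : ℕ) :
    y n = y 0 * (a - 1) / (a ^ n * (a - 1 + y 0) - y 0) := by
  have ha' : a - 1 ≠ 0 := sub_ne_zero.2 ha
  induction n with
  | zero => rw [pow_zero, one_mul, add_sub_cancel_right, mul_div_cancel_right₀ _ ha']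
  | succ n ih =>
    have hn := hden n
    have hn1 := hden (n + 1)
    have hsum : a + y n = (a ^ (n + 1) * (a - 1 + y 0) - y 0) / (a ^ n * (a - 1 + y 0) - y 0) := by
      rw [ih, eq_div_iff hn]
      field_simp
      ring
    rw [hy, hsum, ih]
    field_simp

theorem pow_mul_sub_ne_zero_of_admissible {a α : ℝ} (ha : 1 < |a|)
    (hadm : ∀ n : ℕ, 1 ≤ n → α ≠ a ^ n * (a - 1) / (1 - a ^ n)) (n : ℕ) :
    a ^ n * (a - 1 + α) - α ≠ 0 := by
  rcases n with _ | n
  · have ha1 : a ≠ 1 := by rintro rfl; simp at ha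
    simpa [sub_eq_zero] using ha1
  · have hpow : 1 - a ^ (n + 1) ≠ 0 := by
      intro h
      have := one_lt_pow₀ ha n.succ_ne_zero
      rw [← abs_pow, ← sub_eq_zero.1 h] at this
      simp at this
    intro h
    apply hadm (n + 1) n.succ_pos
    rw [eq_div_iff hpow]
    linear_combination -h

theorem tendsto_div_pow_mul_sub_nhds_zero {𝕜 : Type*} [NormedField 𝕜] {a c : 𝕜} (ha : 1 < ‖a‖)
    (hc : c ≠ 0) (C d : 𝕜) :
    Tendsto (fun n : ℕ => C / (a ^ n * c - d)) atTop (𝓝 0) := by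
  have ha0 : a ≠ 0 := norm_pos_iff.1 (one_pos.trans ha)
  have hpow : Tendsto (fun n : ℕ => a⁻¹ ^ n) atTop (𝓝 0) :=
    tendsto_pow_atTop_nhds_zero_of_norm_lt_one (by rw [norm_inv]; exact inv_lt_one_of_one_lt₀ ha)
  have hlim := (hpow.const_mul C).div (tendsto_const_nhds.sub (hpow.const_mul d)) (by simpa using hc)
  simp only [mul_zero, sub_zero, zero_div] at hlim
  refine hlim.congr fun n => ?_
  have hden : c - d * a⁻¹ ^ n = (a ^ n * c - d) * a⁻¹ ^ n := by rw [inv_pow]; field_simp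
  rw [Pi.div_apply, hden, mul_div_mul_right _ _ (pow_ne_zero _ (inv_ne_zero ha0))]

theorem tendsto_nhds_zero_of_norm_add_two_le {E : Type*} [SeminormedAddCommGroup E] {u : ℕ → E}
    {q : ℝ} (hq0 : 0 ≤ q) (hq1 : q < 1) (h : ∀ᶠ n in atTop, ‖u (n + 2)‖ ≤ q * ‖u n‖) :
    Tendsto u atTop (𝓝 0) := by
  obtain ⟨N, hN⟩ := eventually_atTop.1 h
  set M := max ‖u N‖ ‖u (N + 1)‖
  have hbound : ∀ m, ‖u (N + m)‖ ≤ M * q ^ (m / 2) := by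
    intro m
    induction m using Nat.twoStepInduction with
    | zero => simp [M]
    | one => simp [M]
    | more m ih _ =>
      calc ‖u (N + (m + 2))‖ ≤ q * ‖u (N + m)‖ := hN (N + m) (by omega)
        _ ≤ q * (M * q ^ (m / 2)) := by gcongr
        _ = M * q ^ ((m + 2) / 2) := by rw [show (m + 2) / 2 = m / 2 + 1 by omega, pow_succ]; ring
  rw [← tendsto_add_atTop_iff_nat N]
  refine squeeze_zero_norm (a := fun m => M * q ^ (m / 2)) (fun m => ?_) ?_
  · rw [add_comm]
    exact hbound m
  simpa using ((tendsto_pow_atTop_nhds_zero_of_lt_one hq0 hq1).comp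
    (Nat.tendsto_div_const_atTop two_ne_zero)).const_mul M

theorem stmt_11 (a b : ℝ) (x : ℤ → ℝ) (α : ℝ)
    (ha : 1 < |a|)
    (halpha : α = b * x (-1) * x 0)
    (hadm : ∀ n : ℕ, 1 ≤ n → α ≠ a ^ n * (a - 1) / (1 - a ^ n))
    (hα : α ≠ 1 - a)
    (hrec : ∀ n : ℕ, x ((n : ℤ) + 1) = x ((n : ℤ) - 1) / (a + b * x (n : ℤ) * x ((n : ℤ) - 1))) :
    Filter.Tendsto (fun n : ℕ => x (n : ℤ)) Filter.atTop (nhds 0) := by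
  set y : ℕ → ℝ := fun n => b * x n * x (n - 1)
  have hy0 : y 0 = α := by simp only [y, halpha, Nat.cast_zero, zero_sub]; ring
  have hx : ∀ n : ℕ, x (n + 2 : ℕ) = x n / (a + y (n + 1)) := by
    intro n
    have h := hrec (n + 1)
    simp only [y]
    push_cast at h ⊢
    rw [add_sub_cancel_right] at h ⊢
    rwa [add_assoc, one_add_one_eq_two] at h
  have hy : ∀ n, y (n + 1) = y n / (a + y n) := by
    intro n
    simp only [y, Nat.cast_succ, add_sub_cancel_right]
    rw [hrec n]
    ring
  have hy_lim : Tendsto y atTop (𝓝 0) := by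
    refine (tendsto_div_pow_mul_sub_nhds_zero ha (c := a - 1 + α) (fun h => hα (by linarith))
      (α * (a - 1)) α).congr fun n => ?_
    have ha1 : a ≠ 1 := by rintro rfl; simp at ha
    rw [riccati_solution_eq ha1 hy (hy0 ▸ pow_mul_sub_ne_zero_of_admissible ha hadm) n, hy0]
  obtain ⟨r, hr1, hra⟩ := exists_between ha
  have hfar : ∀ᶠ n in atTop, r < |a + y n| := by
    have : Tendsto (fun n => |a + y n|) atTop (𝓝 |a|) := by simpa using (hy_lim.const_add a).abs
    exact this.eventually_const_lt hra
  refine tendsto_nhds_zero_of_norm_add_two_le (inv_nonneg.2 (by linarith))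
    (inv_lt_one_of_one_lt₀ hr1) ?_
  filter_upwards [(tendsto_add_atTop_nat 1).eventually hfar] with n hn
  rw [Real.norm_eq_abs, Real.norm_eq_abs, hx, abs_div, div_eq_inv_mul]
  gcongr
end

section
/- If a = 1, b ≠ 0, α := b x_{-1} x_0 ∉ {0} ∪ {-1/n : n ≥ 1}, then the solution of x_{n+1} = x_{n-1}/(1 + b x_n x_{n-1}) converges to 0. -/
open Filter


theorem stmt_12 (b : ℝ) (x : ℤ → ℝ) (α : ℝ)
    (hb : b ≠ 0)
    (halpha : α = b * x (-1) * x 0)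
    (hα0 : α ≠ 0)
    (hadm : ∀ n : ℕ, 1 ≤ n → α ≠ -1 / (n : ℝ))
    (hrec : ∀ n : ℕ, x ((n : ℤ) + 1) = x ((n : ℤ) - 1) / (1 + b * x (n : ℤ) * x ((n : ℤ) - 1))) :
    Filter.Tendsto (fun n : ℕ => x (n : ℤ)) Filter.atTop (nhds 0) := by
  set A : ℕ → ℝ := fun n => 1 + (n : ℝ) * α with hAdef
  have hA : ∀ n : ℕ, A n ≠ 0 := by
    intro n
    rcases Nat.eq_zero_or_pos n with h | h
    · simp [hAdef, h]
    · intro hz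
      have hn : (n : ℝ) ≠ 0 := Nat.cast_ne_zero.mpr h.ne'
      apply hadm n h
      simp only [hAdef] at hz
      field_simp
      linarith
  have key : ∀ n : ℕ, b * x (n : ℤ) * x ((n : ℤ) - 1) * A n = α := by
    intro n
    induction n with
    | zero =>
      simp only [hAdef, Nat.cast_zero, Int.cast_zero, zero_mul, add_zero]
      norm_num
      linear_combination -halpha
    | succ n ih =>
      have h1 : (1 : ℝ) + b * x (n : ℤ) * x ((n : ℤ) - 1) = A (n + 1) / A n := by
        rw [eq_div_iff (hA n)]
        simp only [hAdef]
        push_cast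
        linear_combination ih
      have h2 := hrec n
      push_cast
      have h3 : x ((n : ℤ) + 1) = x ((n : ℤ) - 1) * A n / A (n + 1) := by
        rw [h2, h1, div_div_eq_mul_div]
      rw [show (n : ℤ) + 1 - 1 = (n : ℤ) by ring, h3]
      field_simp [hA (n+1)]
      linear_combination ih
  have hstep : ∀ n : ℕ, x ((n : ℤ) + 2) = x (n : ℤ) * A (n + 1) / A (n + 2) := by
    intro n
    have h2 := hrec (n + 1)
    push_cast at h2
    rw [show (n : ℤ) + 1 + 1 = (n : ℤ) + 2 by ring,
      show (n : ℤ) + 1 - 1 = (n : ℤ) by ring] at h2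
    have hk := key (n + 1)
    push_cast at hk
    rw [show (n : ℤ) + 1 - 1 = (n : ℤ) by ring] at hk
    have h1 : (1 : ℝ) + b * x ((n : ℤ) + 1) * x (n : ℤ) = A (n + 2) / A (n + 1) := by
      rw [eq_div_iff (hA (n + 1))]
      simp only [hAdef] at hk ⊢
      push_cast at hk ⊢
      linear_combination hk
    rw [h2, h1, div_div_eq_mul_div]
  set s : ℕ → ℝ := fun n => (x (n : ℤ)) ^ 2 * |A (n + 1)| with hsdef
  have hprod : ∀ n : ℕ, A (n + 1) * A (n + 3) = (A (n + 2)) ^ 2 - α ^ 2 := by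
    intro n; simp only [hAdef]; push_cast; ring
  have hs : ∀ n : ℕ, α ^ 2 ≤ (A (n + 2)) ^ 2 → s (n + 2) ≤ s n := by
    intro n h2
    have hpos : (0 : ℝ) < (A (n + 2)) ^ 2 := by
      have := hA (n + 2); positivity
    have hxe := hstep n
    have hcast : ((n + 2 : ℕ) : ℤ) = (n : ℤ) + 2 := by push_cast; ring
    have e1 : s (n + 2) = (x (n : ℤ)) ^ 2 * (A (n + 1)) ^ 2 * |A (n + 3)| / (A (n + 2)) ^ 2 := by
      simp only [hsdef, hcast, hxe]
      rw [div_pow]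
      ring
    rw [e1, hsdef, div_le_iff₀ hpos]
    have key2 : |A (n + 1)| * |A (n + 3)| ≤ (A (n + 2)) ^ 2 := by
      rw [← abs_mul, hprod n, abs_of_nonneg (by linarith)]
      nlinarith [sq_nonneg α]
    calc (x (n : ℤ)) ^ 2 * (A (n + 1)) ^ 2 * |A (n + 3)|
        = ((x (n : ℤ)) ^ 2 * |A (n + 1)|) * (|A (n + 1)| * |A (n + 3)|) := by
          rw [← sq_abs (A (n+1))]; ring
      _ ≤ ((x (n : ℤ)) ^ 2 * |A (n + 1)|) * (A (n + 2)) ^ 2 := by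
          apply mul_le_mul_of_nonneg_left key2
          positivity
  have habs : (0 : ℝ) < |α| := abs_pos.mpr hα0
  have habs2 : ∀ m : ℕ, (m : ℝ) * |α| - 1 ≤ |A m| := by
    intro m
    have h4 : |(m : ℝ) * α| ≤ |A m| + 1 := by
      calc |(m : ℝ) * α| = |A m + (-1)| := by
            simp only [hAdef]; ring_nf
        _ ≤ |A m| + |(-1 : ℝ)| := abs_add_le _ _
        _ = |A m| + 1 := by norm_num
    have h5 : |(m : ℝ) * α| = (m : ℝ) * |α| := by
      rw [abs_mul, Nat.abs_cast]
    linarith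
  obtain ⟨N, hN⟩ : ∃ N : ℕ, ∀ m : ℕ, N ≤ m → α ^ 2 ≤ (A m) ^ 2 := by
    refine ⟨⌈(1 + |α|) / |α|⌉₊, fun m hm => ?_⟩
    have h1 : (1 + |α|) / |α| ≤ (m : ℝ) :=
      le_trans (Nat.le_ceil _) (Nat.cast_le.mpr hm)
    have h2 : 1 + |α| ≤ (m : ℝ) * |α| := by
      rw [div_le_iff₀ habs] at h1; linarith
    have h3 : |α| ≤ |A m| := by
      have := habs2 m; linarith
    calc α ^ 2 = |α| ^ 2 := (sq_abs α).symm
      _ ≤ |A m| ^ 2 := by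
          apply pow_le_pow_left₀ (abs_nonneg α) h3
      _ = (A m) ^ 2 := sq_abs _
  set C : ℝ := max (s N) (s (N + 1)) with hCdef
  have hbd : ∀ k : ℕ, s (N + k) ≤ C := by
    intro k
    induction k using Nat.twoStepInduction with
    | zero => exact le_max_left _ _
    | one => exact le_max_right _ _
    | more k ih _ =>
      have h1 : s (N + k + 2) ≤ s (N + k) := hs (N + k) (hN (N + k + 2) (by omega))
      calc s (N + (k + 2)) = s (N + k + 2) := by rw [show N + (k + 2) = N + k + 2 by omega]
        _ ≤ s (N + k) := h1
        _ ≤ C := ih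
  have hAtends : Filter.Tendsto (fun n : ℕ => |A (n + 1)|) atTop atTop := by
    apply tendsto_atTop_mono (fun n : ℕ => habs2 (n + 1))
    have t1 : Filter.Tendsto (fun n : ℕ => ((n + 1 : ℕ) : ℝ)) atTop atTop :=
      tendsto_natCast_atTop_atTop.comp (tendsto_add_atTop_nat 1)
    have t2 : Filter.Tendsto (fun n : ℕ => ((n + 1 : ℕ) : ℝ) * |α|) atTop atTop :=
      t1.atTop_mul_const habs
    have t3 := tendsto_atTop_add_const_right atTop (-1) t2
    simpa [sub_eq_add_neg] using t3
  have hCdiv : Filter.Tendsto (fun n : ℕ => C / |A (n + 1)|) atTop (nhds 0) :=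
    Filter.Tendsto.div_atTop tendsto_const_nhds hAtends
  have hsq : Filter.Tendsto (fun n : ℕ => (x (n : ℤ)) ^ 2) atTop (nhds 0) := by
    apply squeeze_zero' (Filter.Eventually.of_forall fun n => sq_nonneg _) ?_ hCdiv
    filter_upwards [Filter.eventually_ge_atTop N] with n hn
    have hsn : s n ≤ C := by
      have := hbd (n - N)
      rwa [Nat.add_sub_cancel' hn] at this
    have hApos : 0 < |A (n + 1)| := abs_pos.mpr (hA (n + 1))
    exact (le_div_iff₀ hApos).mpr hsn
  have habs3 : Filter.Tendsto (fun n : ℕ => |x (n : ℤ)|) atTop (nhds 0) := by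
    have := (Real.continuous_sqrt.tendsto' 0 0 Real.sqrt_zero).comp hsq
    simpa [Function.comp_def, Real.sqrt_sq_eq_abs] using this
  exact squeeze_zero_norm (fun n => le_of_eq (Real.norm_eq_abs _)) habs3
end

section
/- If 0 < |a| < 1 and α > (1-a)/2, then for all k ≥ 0, ∏_{i=0}^{k} h(2i+1) ≤ exp(2|(1-a-α)a|/(1-a²)). -/
theorem stmt_19 (a α : ℝ) (h : ℕ → ℝ)
    (ha0 : 0 < |a|) (ha1 : |a| < 1) (hα : (1 - a) / 2 < α)
    (hh : ∀ n : ℕ, h n =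
      (a ^ n * (1 - a) + α * (1 - a ^ n)) / (a ^ (n + 1) * (1 - a) + α * (1 - a ^ (n + 1)))) :
    ∀ k : ℕ,
      (∏ i ∈ Finset.range (k + 1), h (2 * i + 1)) ≤
        Real.exp (2 * |(1 - a - α) * a| / (1 - a ^ 2)) := by
  obtain ⟨ha_lo, ha_hi⟩ := abs_lt.mp ha1
  have h1a : 0 < 1 - a := by linarith
  have ha2 : a ^ 2 < 1 := by nlinarith
  have hα2 : 1 - a < 2 * α := by linarith
  intro k
  have key : ∀ i : ℕ, 0 ≤ h (2*i+1) ∧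
      h (2*i+1) ≤ Real.exp (2 * |1 - a - α| * |a| ^ (2*i+1)) := by
    intro i
    have hs1 : |a ^ (2*i+1)| ≤ 1 := by
      rw [abs_pow]; exact pow_le_one₀ (abs_nonneg a) ha1.le
    obtain ⟨hs_lo, hs_hi⟩ := abs_le.mp hs1
    have ht0 : (0:ℝ) ≤ a ^ (2*i+1) * a := by
      have : a ^ (2*i+1) * a = (a^2)^(i+1) := by ring
      rw [this]; positivity
    have ht1 : a ^ (2*i+1) * a ≤ 1 := by
      have e : a ^ (2*i+1) * a = (a^2)^(i+1) := by ring
      rw [e]; exact pow_le_one₀ (sq_nonneg a) ha2.le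
    have hval : h (2*i+1) = (α + (1-a-α) * a^(2*i+1)) / (α + (1-a-α) * (a^(2*i+1) * a)) := by
      rw [hh (2*i+1)]
      have e : (2*i+1+1) = (2*i+1)+1 := rfl
      rw [e, pow_succ]
      ring_nf
    have hN : 0 ≤ α + (1-a-α) * a^(2*i+1) := by
      nlinarith [mul_nonneg (by linarith : (0:ℝ) ≤ 1 + a^(2*i+1)) h1a.le,
        mul_nonneg (by linarith : (0:ℝ) ≤ 1 - a^(2*i+1)) (by linarith : (0:ℝ) ≤ 2*α - (1-a))]
    have hD : (1-a)/2 ≤ α + (1-a-α) * (a^(2*i+1) * a) := by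
      nlinarith [mul_nonneg ht0 h1a.le,
        mul_nonneg (by linarith : (0:ℝ) ≤ 1 - a^(2*i+1)*a) (by linarith : (0:ℝ) ≤ 2*α - (1-a))]
    have hD0 : 0 < α + (1-a-α) * (a^(2*i+1) * a) := by linarith
    have habs : |(1-a-α) * a^(2*i+1) * (1-a)| = |1-a-α| * |a|^(2*i+1) * (1-a) := by
      rw [abs_mul, abs_mul, abs_pow, abs_of_pos h1a]
    have h1 : (1-a-α) * a^(2*i+1) * (1-a) ≤ |1-a-α| * |a|^(2*i+1) * (1-a) := by
      rw [← habs]; exact le_abs_self _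
    have hu : (0:ℝ) ≤ 2 * |1-a-α| * |a|^(2*i+1) := by positivity
    have h2 : 2 * |1-a-α| * |a|^(2*i+1) * ((1-a)/2)
        ≤ 2 * |1-a-α| * |a|^(2*i+1) * (α + (1-a-α) * (a^(2*i+1) * a)) :=
      mul_le_mul_of_nonneg_left hD hu
    have hle : α + (1-a-α) * a^(2*i+1)
        ≤ (1 + 2 * |1-a-α| * |a|^(2*i+1)) * (α + (1-a-α) * (a^(2*i+1) * a)) := by
      nlinarith [h1, h2]
    constructor
    · rw [hval]; exact div_nonneg hN hD0.le
    · rw [hval]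
      calc (α + (1-a-α) * a^(2*i+1)) / (α + (1-a-α) * (a^(2*i+1) * a))
          ≤ 1 + 2 * |1-a-α| * |a|^(2*i+1) := by
            rw [div_le_iff₀ hD0]; exact hle
        _ ≤ Real.exp (2 * |1-a-α| * |a|^(2*i+1)) := by
            have := Real.add_one_le_exp (2 * |1-a-α| * |a|^(2*i+1)); linarith
  have step1 : (∏ i ∈ Finset.range (k+1), h (2*i+1))
      ≤ ∏ i ∈ Finset.range (k+1), Real.exp (2 * |1-a-α| * |a|^(2*i+1)) :=
    Finset.prod_le_prod (fun i _ => (key i).1) (fun i _ => (key i).2)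
  have step2 : (∏ i ∈ Finset.range (k+1), Real.exp (2 * |1-a-α| * |a|^(2*i+1)))
      = Real.exp (∑ i ∈ Finset.range (k+1), 2 * |1-a-α| * |a|^(2*i+1)) :=
    (Real.exp_sum _ _).symm
  have hsum : (∑ i ∈ Finset.range (k+1), 2 * |1-a-α| * |a|^(2*i+1))
      ≤ 2 * |(1 - a - α) * a| / (1 - a ^ 2) := by
    have h2pos : 0 < 1 - a^2 := by linarith
    have hgeo : (∑ i ∈ Finset.range (k+1), (a^2)^i) ≤ 1/(1-a^2) := by
      rw [le_div_iff₀ h2pos]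
      have hgm := geom_sum_mul (a^2) (k+1)
      nlinarith [pow_nonneg (sq_nonneg a) (k+1), hgm]
    calc (∑ i ∈ Finset.range (k+1), 2 * |1-a-α| * |a|^(2*i+1))
        = 2 * |1-a-α| * |a| * ∑ i ∈ Finset.range (k+1), (a^2)^i := by
          rw [Finset.mul_sum]
          refine Finset.sum_congr rfl (fun i _ => ?_)
          rw [pow_add, pow_mul, sq_abs, pow_one]; ring
      _ ≤ 2 * |1-a-α| * |a| * (1/(1-a^2)) :=
          mul_le_mul_of_nonneg_left hgeo (by positivity)
      _ = 2 * |(1 - a - α) * a| / (1 - a ^ 2) := by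
          rw [abs_mul]; ring
  calc (∏ i ∈ Finset.range (k+1), h (2*i+1))
      ≤ ∏ i ∈ Finset.range (k+1), Real.exp (2 * |1-a-α| * |a|^(2*i+1)) := step1
    _ = Real.exp (∑ i ∈ Finset.range (k+1), 2 * |1-a-α| * |a|^(2*i+1)) := step2
    _ ≤ Real.exp (2 * |(1 - a - α) * a| / (1 - a ^ 2)) := Real.exp_le_exp.mpr hsum
end
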